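/- arXiv:2010.11044 — 3 statements merged into one kernel-verified Lean document; each statement's English description precedes it below -/
import Mathlib

section
/- For every integer q with 1 ≤ q ≤ 5 there exists η ∈ [0,1) such that Re(δ(ζ)/(1−ηζ)) > 0 for every complex ζ with |ζ| < 1, where δ(ζ) = Σ_{ℓ=1}^q (1/ℓ)(1−ζ)^ℓ is the generating polynomial of the q-step BDF method. -/
/-!
Write `ζ = a + bi`. Since `1 - ηζ ≠ 0` on the unit disc, `Re (δ(ζ) / (1 - ηζ))` has the sign of
`Re (δ(ζ) (1 - η ζ̄))`, a real polynomial in `a` and `b`. For `q = 1, …, 5` and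
`η = 0, 0, 1/5, 2/5, 17/20` its positivity on `a² + b² < 1` is certified by combining squares
with multiples of `1 - a² - b²`.
-/

open ComplexConjugate

theorem Complex.re_div_pos_iff {z w : ℂ} (hw : w ≠ 0) :
    0 < (z / w).re ↔ 0 < (z * conj w).re := by
  rw [div_eq_mul_inv, Complex.inv_def, ← mul_assoc, Complex.re_mul_ofReal]
  exact mul_pos_iff_of_pos_right (inv_pos.mpr (Complex.normSq_pos.mpr hw))

theorem Complex.one_sub_ne_zero_of_norm_lt_one {z : ℂ} (hz : ‖z‖ < 1) : 1 - z ≠ 0 :=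
  sub_ne_zero.mpr fun h => by simp [← h] at hz

theorem re_div_one_sub_ofReal_mul_pos {f : ℂ → ℂ} {η : ℝ} (hη : |η| ≤ 1)
    (hf : ∀ a b : ℝ, a ^ 2 + b ^ 2 < 1 → 0 < (f ⟨a, b⟩ * (1 - η * ⟨a, -b⟩)).re)
    (ζ : ℂ) (hζ : ‖ζ‖ < 1) : 0 < (f ζ / (1 - η * ζ)).re := by
  have hηζ : ‖(η : ℂ) * ζ‖ < 1 := by
    rw [norm_mul, Complex.norm_real, Real.norm_eq_abs]
    nlinarith [abs_nonneg η, norm_nonneg ζ]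
  rw [Complex.re_div_pos_iff (Complex.one_sub_ne_zero_of_norm_lt_one hηζ)]
  have hab : ζ.re ^ 2 + ζ.im ^ 2 < 1 := by
    rw [← sq_lt_one_iff₀ (norm_nonneg ζ), ← Complex.normSq_eq_norm_sq] at hζ
    simpa [Complex.normSq_apply, sq] using hζ
  simpa using hf ζ.re ζ.im hab

noncomputable def bdfPoly (q : ℕ) (ζ : ℂ) : ℂ :=
  ∑ ℓ ∈ Finset.Icc 1 q, (ℓ : ℂ)⁻¹ * (1 - ζ) ^ ℓ

def IsBDFMultiplier (q : ℕ) (η : ℝ) : Prop :=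
  ∀ ζ : ℂ, ‖ζ‖ < 1 → 0 < (bdfPoly q ζ / (1 - η * ζ)).re

theorem isBDFMultiplier_one : IsBDFMultiplier 1 0 :=
  re_div_one_sub_ofReal_mul_pos (f := bdfPoly 1) (by norm_num) fun a b hab => by
    simp [bdfPoly]
    nlinarith [sq_nonneg b]

theorem isBDFMultiplier_two : IsBDFMultiplier 2 0 :=
  re_div_one_sub_ofReal_mul_pos (f := bdfPoly 2) (by norm_num) fun a b hab => by
    simp [bdfPoly, Finset.sum_Icc_succ_top, Complex.mul_re, Complex.mul_im, pow_succ]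
    nlinarith [sq_nonneg (1 - a), sq_nonneg b]

theorem isBDFMultiplier_three : IsBDFMultiplier 3 (1 / 5) :=
  re_div_one_sub_ofReal_mul_pos (f := bdfPoly 3) (by norm_num) fun a b hab => by
    have hs : 0 < 1 - a ^ 2 - b ^ 2 := by linarith
    simp [bdfPoly, Finset.sum_Icc_succ_top, Complex.mul_re, Complex.mul_im, pow_succ]
    nlinarith [sq_nonneg (1 - a), sq_nonneg b, sq_nonneg ((1 - a) ^ 2 - b ^ 2),
      sq_nonneg ((1 - a) * b), mul_pos hs hs]

theorem isBDFMultiplier_four : IsBDFMultiplier 4 (2 / 5) :=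
  re_div_one_sub_ofReal_mul_pos (f := bdfPoly 4) (by norm_num) fun a b hab => by
    have hs : 0 < 1 - a ^ 2 - b ^ 2 := by linarith
    simp [bdfPoly, Finset.sum_Icc_succ_top, Complex.mul_re, Complex.mul_im, pow_succ]
    nlinarith [sq_nonneg (1 - a), sq_nonneg b, sq_nonneg ((1 - a) ^ 2 - b ^ 2),
      sq_nonneg ((1 - a) * b), mul_pos hs hs,
      mul_nonneg hs.le (sq_nonneg ((1 - a) ^ 2 - b ^ 2)), mul_nonneg hs.le (sq_nonneg ((1 - a) * b)),
      mul_nonneg hs.le (sq_nonneg (1 - a)), mul_nonneg hs.le (sq_nonneg b)]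

theorem isBDFMultiplier_five : IsBDFMultiplier 5 (17 / 20) :=
  re_div_one_sub_ofReal_mul_pos (f := bdfPoly 5) (by norm_num) fun a b hab => by
    have hs : 0 < 1 - a ^ 2 - b ^ 2 := by linarith
    simp [bdfPoly, Finset.sum_Icc_succ_top, Complex.mul_re, Complex.mul_im, pow_succ]
    -- A sum-of-squares decomposition found numerically and rounded to rationals.
    linarith [
      sq_nonneg ((1 - a) - 1415 / 2888 * (1 - a) ^ 2 + 217 / 2888 * b ^ 2
        - 941 / 5776 * (1 - a) ^ 3 - 795 / 2888 * (1 - a) * b ^ 2),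
      sq_nonneg ((1 - a) ^ 2 - 1448849 / 3831535 * b ^ 2 - 2813647 / 38315350 * (1 - a) ^ 3
        - 64513 / 103555 * (1 - a) * b ^ 2),
      sq_nonneg (b ^ 2 - 44732695981 / 67549618830 * (1 - a) ^ 3
        - 105165433 / 794701398 * (1 - a) * b ^ 2),
      sq_nonneg ((1 - a) ^ 3 - 1062359391805495 / 945600429810047 * (1 - a) * b ^ 2),
      sq_nonneg ((1 - a) * b ^ 2),
      sq_nonneg (b - 305 / 2142 * (1 - a) * b - 307 / 714 * (1 - a) ^ 2 * b - 22 / 119 * b ^ 3),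
      sq_nonneg ((1 - a) * b - 44511 / 104393 * (1 - a) ^ 2 * b - 639144 / 1357109 * b ^ 3),
      sq_nonneg ((1 - a) ^ 2 * b - 45802153 / 44879235 * b ^ 3),
      sq_nonneg (b ^ 3),
      mul_nonneg hs.le (sq_nonneg (1 + 269 / 63 * (1 - a) + 85 / 63 * (1 - a) ^ 2 + 47 / 21 * b ^ 2)),
      mul_nonneg hs.le (sq_nonneg ((1 - a) + 3089 / 8077 * (1 - a) ^ 2 + 5793 / 16154 * b ^ 2)),
      mul_nonneg hs.le (sq_nonneg ((1 - a) ^ 2 + 2427908 / 4424691 * b ^ 2)),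
      mul_nonneg hs.le (sq_nonneg (b ^ 2)),
      mul_nonneg hs.le (sq_nonneg (b + 403 / 530 * (1 - a) * b)),
      mul_nonneg hs.le (sq_nonneg ((1 - a) * b))]

/-- The Nevanlinna–Odeh multiplier lemma for the BDF methods of orders 1 to 5. -/
theorem nevanlinna_odeh_multiplier (q : ℕ) (hq1 : 1 ≤ q) (hq5 : q ≤ 5) :
    ∃ η : ℝ, η ∈ Set.Ico (0 : ℝ) 1 ∧
      ∀ ζ : ℂ, ‖ζ‖ < 1 →
        0 < ((∑ ℓ ∈ Finset.Icc 1 q, (ℓ : ℂ)⁻¹ * (1 - ζ) ^ ℓ) / (1 - (η : ℂ) * ζ)).re := by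
  interval_cases q
  · exact ⟨0, by norm_num, isBDFMultiplier_one⟩
  · exact ⟨0, by norm_num, isBDFMultiplier_two⟩
  · exact ⟨1 / 5, by norm_num, isBDFMultiplier_three⟩
  · exact ⟨2 / 5, by norm_num, isBDFMultiplier_four⟩
  · exact ⟨17 / 20, by norm_num, isBDFMultiplier_five⟩
end

section
/- Let δ(ζ) = 3/2 − 2ζ + (1/2)ζ² be the generating polynomial of the 2-step BDF method. Then Re δ(ζ) > 0 for every complex ζ with |ζ| < 1. -/
/-!
Writing `x = Re ζ`, one has `Re (ζ²) = 2x² − |ζ|²`, so the real part of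
`3/2 − 2ζ + ζ²/2` equals `(1 − x)² + (1 − |ζ|²)/2`: a square plus a term that is positive
on the open unit disc.
-/

namespace Complex

theorem re_sq_eq_two_mul_re_sq_sub_norm_sq (ζ : ℂ) : (ζ ^ 2).re = 2 * ζ.re ^ 2 - ‖ζ‖ ^ 2 := by
  rw [← normSq_eq_norm_sq, normSq_apply, pow_two, mul_re]
  ring

theorem re_bdf2_eq (ζ : ℂ) :
    ((3 / 2 : ℂ) - 2 * ζ + (1 / 2 : ℂ) * ζ ^ 2).re = (1 - ζ.re) ^ 2 + (1 - ‖ζ‖ ^ 2) / 2 := by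
  simp [re_sq_eq_two_mul_re_sq_sub_norm_sq]
  ring

end Complex

/-- The Nevanlinna–Odeh multiplier property for BDF2 with multiplier parameter η = 0:
the generating polynomial δ(ζ) = 3/2 − 2ζ + (1/2)ζ² of the 2-step BDF method has
positive real part on the open unit disc. -/
theorem bdf2_positive_real_part (ζ : ℂ) (hζ : ‖ζ‖ < 1) :
    0 < ((3 / 2 : ℂ) - 2 * ζ + (1 / 2 : ℂ) * ζ ^ 2).re := by
  rw [Complex.re_bdf2_eq]
  have hnorm_sq : ‖ζ‖ ^ 2 < 1 := pow_lt_one₀ (norm_nonneg ζ) hζ two_ne_zero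
  exact add_pos_of_nonneg_of_pos (sq_nonneg _) (by linarith)
end

section
/- For every integer q with 1 ≤ q ≤ 5 there exist η ∈ [0,1) and a symmetric positive definite matrix G = (g_{ij}) ∈ ℝ^{q×q} such that for every real inner product space (E, ⟨·,·⟩) and all vectors w_0, …, w_q ∈ E one has ⟨Σ_{i=0}^q δ_i w_{q−i}, w_q − η w_{q−1}⟩ ≥ Σ_{i,j=1}^q g_{ij} ⟨w_i, w_j⟩ − Σ_{i,j=1}^q g_{ij} ⟨w_{i−1}, w_{j−1}⟩, where δ_0, …, δ_q are the q-step BDF coefficients. -/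
/-!
Write `W_n = (w_n, …, w_{n+q-1})` and `|W|_G² = ∑ g_ij ⟪w_i, w_j⟫`. The defect
`⟪∑ δ_i w_{q-i}, w_q - η w_{q-1}⟫ - (|W_1|_G² - |W_0|_G²)` is the quadratic form
`∑ m_ij ⟪w_i, w_j⟫` of a symmetric `(q+1) × (q+1)` matrix `M` built from `δ`, `η` and `G`.
By the Schur product theorem this form is nonnegative as soon as `M` is positive semidefinite,
because the Gram matrix of `w` is. So it suffices to exhibit, for each `q ≤ 5`, a multiplier `η`
and a matrix `G` with `G` positive definite and `M` positive semidefinite; both facts are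
certified by exact rational `LDLᵀ` factorisations.
-/

open RealInnerProductSpace Matrix Finset Polynomial

section InnerProductSpace

variable {E : Type*} [NormedAddCommGroup E] [InnerProductSpace ℝ E]

theorem Matrix.PosSemidef.sum_sum_mul_inner_nonneg {ι : Type*} [Fintype ι] {M : Matrix ι ι ℝ}
    (hM : M.PosSemidef) (w : ι → E) : 0 ≤ ∑ i, ∑ j, M i j * ⟪w i, w j⟫ := by
  simpa [dotProduct, mulVec, gram, mul_sum] using
    (hM.hadamard (posSemidef_gram ℝ w)).dotProduct_mulVec_nonneg 1

theorem sum_sum_symmetrized_mul_inner {ι : Type*} [Fintype ι] (a b : ι → ℝ) (v : ι → E) :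
    ∑ i, ∑ j, (a i * b j + a j * b i) / 2 * ⟪v i, v j⟫ = ⟪∑ i, a i • v i, ∑ j, b j • v j⟫ := by
  have swap : ∑ i, ∑ j, a j * b i * ⟪v i, v j⟫ = ∑ i, ∑ j, a i * b j * ⟪v i, v j⟫ := by
    rw [sum_comm]
    refine sum_congr rfl fun i _ => sum_congr rfl fun j _ => ?_
    rw [real_inner_comm]
  simp_rw [sum_inner, inner_sum, real_inner_smul_left, real_inner_smul_right, add_div, add_mul,
    sum_add_distrib, div_mul_eq_mul_div, ← sum_div, swap, mul_assoc]
  ring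

end InnerProductSpace

theorem sum_range_smul_reflect {R M : Type*} [AddCommMonoid M] [SMul R M] (q : ℕ) (δ : ℕ → R)
    (w : ℕ → M) : ∑ i ∈ range (q + 1), δ i • w (q - i) = ∑ i : Fin (q + 1), δ (q - i) • w i := by
  rw [Fin.sum_univ_eq_sum_range (fun i => δ (q - i) • w i), ← sum_range_reflect]
  refine sum_congr rfl fun i hi => ?_
  simp only [add_tsub_cancel_right, Nat.sub_sub_self (Nat.lt_succ_iff.1 (mem_range.1 hi))]

theorem Matrix.posDef_conjTranspose_mul_diagonal_mul {n : Type*} [Fintype n] [LinearOrder n]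
    {U : Matrix n n ℝ} (hU : U.IsUpperTriangular) (hdiag : ∀ i, U i i ≠ 0) {d : n → ℝ}
    (hd : ∀ i, 0 < d i) : (Uᴴ * diagonal d * U).PosDef := by
  refine (posDef_diagonal_iff.2 hd).conjTranspose_mul_mul_same (mulVec_injective_of_isUnit ?_)
  rw [isUnit_iff_isUnit_det, det_of_isUpperTriangular hU]
  exact (prod_ne_zero_iff.2 fun i _ => hdiag i).isUnit

namespace Matrix

variable {q : ℕ}

def extendFirst (G : Matrix (Fin q) (Fin q) ℝ) : Matrix (Fin (q + 1)) (Fin (q + 1)) ℝ :=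
  of (vecCons 0 fun i => vecCons 0 (G i))

def extendLast (G : Matrix (Fin q) (Fin q) ℝ) : Matrix (Fin (q + 1)) (Fin (q + 1)) ℝ :=
  of (Fin.snoc (fun i => Fin.snoc (G i) 0) 0)

theorem sum_sum_extendFirst_mul (G : Matrix (Fin q) (Fin q) ℝ)
    (f : Fin (q + 1) → Fin (q + 1) → ℝ) :
    ∑ i, ∑ j, G.extendFirst i j * f i j = ∑ i, ∑ j, G i j * f i.succ j.succ := by
  simp [Fin.sum_univ_succ, extendFirst]

theorem sum_sum_extendLast_mul (G : Matrix (Fin q) (Fin q) ℝ)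
    (f : Fin (q + 1) → Fin (q + 1) → ℝ) :
    ∑ i, ∑ j, G.extendLast i j * f i j = ∑ i, ∑ j, G i j * f i.castSucc j.castSucc := by
  simp [Fin.sum_univ_castSucc, extendLast]

end Matrix

theorem Polynomial.coeff_one_sub_X_pow (ℓ j : ℕ) :
    (((1 : ℝ[X]) - X) ^ ℓ).coeff j = (-1 : ℝ) ^ j * ℓ.choose j := by
  rw [sub_eq_add_neg, add_comm, add_pow, finsetSum_coeff]
  simp only [neg_pow (X : ℝ[X]), one_pow, mul_one, ← C_eq_natCast, ← C_neg, ← C_1, ← C_pow,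
    mul_right_comm _ (X ^ _), ← C_mul, coeff_C_mul_X_pow, sum_ite_eq, mem_range]
  split_ifs with h
  · rfl
  · simp [Nat.choose_eq_zero_of_lt (by omega : ℓ < j)]

noncomputable def bdfCoeff (q j : ℕ) : ℝ :=
  (∑ ℓ ∈ Icc 1 q, C ((ℓ : ℝ)⁻¹) * ((1 : ℝ[X]) - X) ^ ℓ).coeff j

theorem bdfCoeff_eq (q j : ℕ) :
    bdfCoeff q j = ∑ ℓ ∈ range q, (-1) ^ j * (ℓ + 1).choose j / (ℓ + 1 : ℝ) := by
  rw [bdfCoeff, finsetSum_coeff, ← Ico_add_one_right_eq_Icc, sum_Ico_eq_sum_range,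
    add_tsub_cancel_right]
  simp [coeff_one_sub_X_pow, add_comm 1, div_eq_inv_mul, mul_comm]

section EnergyMatrix

noncomputable def multiplierVector (q : ℕ) (η : ℝ) : Fin (q + 1) → ℝ :=
  fun j => (if (j : ℕ) = q then 1 else 0) - if (j : ℕ) = q - 1 then η else 0

variable {q : ℕ}

noncomputable def energyMatrix (a b : Fin (q + 1) → ℝ) (G : Matrix (Fin q) (Fin q) ℝ) :
    Matrix (Fin (q + 1)) (Fin (q + 1)) ℝ :=
  of (fun i j => (a i * b j + a j * b i) / 2) + G.extendLast - G.extendFirst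

theorem sum_multiplierVector_smul {M : Type*} [AddCommGroup M] [Module ℝ M] (η : ℝ) (w : ℕ → M) :
    ∑ j : Fin (q + 1), multiplierVector q η j • w j = w q - η • w (q - 1) := by
  simp only [multiplierVector]
  rw [Fin.sum_univ_eq_sum_range
    (fun j => ((if j = q then 1 else 0) - if j = q - 1 then η else 0) • w j)]
  simp [sub_smul, ite_smul, sum_sub_distrib]

variable {E : Type*} [NormedAddCommGroup E] [InnerProductSpace ℝ E]

theorem sum_sum_energyMatrix_mul_inner (δ : ℕ → ℝ) (η : ℝ) (G : Matrix (Fin q) (Fin q) ℝ)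
    (w : ℕ → E) :
    ∑ i, ∑ j, energyMatrix (fun i => δ (q - i)) (multiplierVector q η) G i j * ⟪w i, w j⟫ =
      ⟪∑ i ∈ range (q + 1), δ i • w (q - i), w q - η • w (q - 1)⟫ -
        ((∑ i : Fin q, ∑ j : Fin q, G i j * ⟪w (i + 1), w (j + 1)⟫) -
          ∑ i : Fin q, ∑ j : Fin q, G i j * ⟪w i, w j⟫) := by
  simp only [energyMatrix, Matrix.sub_apply, Matrix.add_apply, of_apply, sub_mul, add_mul,
    sum_sub_distrib, sum_add_distrib, sum_sum_extendFirst_mul, sum_sum_extendLast_mul,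
    sum_sum_symmetrized_mul_inner, sum_multiplierVector_smul, sum_range_smul_reflect, Fin.val_succ,
    Fin.val_castSucc]
  ring

theorem gNorm_sub_le_inner_of_posSemidef {δ : ℕ → ℝ} {η : ℝ} {G : Matrix (Fin q) (Fin q) ℝ}
    (hM : (energyMatrix (fun i => δ (q - i)) (multiplierVector q η) G).PosSemidef) (w : ℕ → E) :
    (∑ i : Fin q, ∑ j : Fin q, G i j * ⟪w (i + 1), w (j + 1)⟫) -
        ∑ i : Fin q, ∑ j : Fin q, G i j * ⟪w i, w j⟫ ≤
      ⟪∑ i ∈ range (q + 1), δ i • w (q - i), w q - η • w (q - 1)⟫ := by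
  have hform := hM.sum_sum_mul_inner_nonneg (fun i => w i)
  rw [sum_sum_energyMatrix_mul_inner] at hform
  linarith

end EnergyMatrix

noncomputable def bdfMultiplier : ℕ → ℝ
  | 1 => 0
  | 2 => 1 / 10
  | 3 => 1 / 2
  | 4 => 3 / 5
  | 5 => 9 / 10
  | _ => 0

noncomputable def bdfGMatrix : (q : ℕ) → Matrix (Fin q) (Fin q) ℝ
  | 1 => !![1 / 2]
  | 2 => !![14117 / 81920, -32549 / 81920;
            -32549 / 81920, 17569 / 16384]
  | 3 => !![8105 / 196608, -5591 / 49152, 30643 / 196608;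
            -5591 / 49152, 89683 / 196608, -124663 / 196608;
            30643 / 196608, -124663 / 196608, 46033 / 49152]
  | 4 => !![10081 / 327680, -79483 / 983040, 65149 / 491520, -13021 / 98304;
            -79483 / 983040, 89909 / 245760, -105901 / 163840, 37883 / 65536;
            65149 / 491520, -105901 / 163840, 1334261 / 983040, -80399 / 65536;
            -13021 / 98304, 37883 / 65536, -80399 / 65536, 117755 / 98304]
  | 5 => !![38407 / 1638400, -32567 / 491520, 81281 / 614400, -10643 / 76800, 19367 / 327680;
            -32567 / 491520, 25043 / 61440, -700053 / 819200, 3781 / 4096, -22727 / 49152;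
            81281 / 614400, -700053 / 819200, 255781 / 122880, -2076153 / 819200, 21123 / 16384;
            -10643 / 76800, 3781 / 4096, -2076153 / 819200, 465391 / 122880, -1780403 / 819200;
            19367 / 327680, -22727 / 49152, 21123 / 16384, -1780403 / 819200, 1377773 / 983040]
  | _ => 0

noncomputable def bdfGMatrixFactor : (q : ℕ) → Matrix (Fin q) (Fin q) ℝ
  | 1 => !![1]
  | 2 => !![1, -32549 / 14117;
            0, 1]
  | 3 => !![1, -22364 / 8105, 30643 / 8105;
            0, 1, -325093563 / 226732219;
            0, 0, 1]
  | 4 => !![1, -79483 / 30243, 130298 / 30243, -130210 / 30243;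
            0, 1, -8860107724 / 4558924259, 6835952105 / 4558924259;
            0, 0, 1, -187556737783087 / 185570249037103;
            0, 0, 0, 1]
  | 5 => !![1, -325670 / 115221, 650248 / 115221, -681152 / 115221, 96835 / 38407;
            0, 1, -136099287059 / 62388705670, 15047497468 / 6238870567,
              -16725400335 / 12477741134;
            0, 0, 1, -90930826592877850 / 43923324706289299,
              47753190670896775 / 43923324706289299;
            0, 0, 0, 1, -25198850370372469661423 / 24756524902329421154031;
            0, 0, 0, 0, 1]
  | _ => 0

noncomputable def bdfGMatrixPivots : (q : ℕ) → Fin q → ℝ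
  | 1 => ![1 / 2]
  | 2 => ![14117 / 81920, 44109 / 282340]
  | 3 => ![8105 / 196608, 226732219 / 1593507840, 149006897 / 2720786628]
  | 4 => ![10081 / 327680,
           4558924259 / 29730078720,
           185570249037103 / 896320980713472,
           13233041124003 / 185570249037103]
  | 5 => ![38407 / 1638400,
           6238870567 / 28316712960,
           43923324706289299 / 153326483054592000,
           8252174967443140384677 / 17990993799696096870400,
           318165705110523862801409 / 7426957470698826346209300]
  | _ => 0

/- The energy matrix annihilates `(1, …, 1)` because `∑ δ_i = 0`, so its last pivot vanishes and
its `LDLᵀ` factor needs only `q` rows. -/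
noncomputable def bdfEnergyFactor : (q : ℕ) → Matrix (Fin q) (Fin (q + 1)) ℝ
  | 1 => !![1, -1]
  | 2 => !![1, -34597 / 14117, 20480 / 14117;
            0, 1, -1]
  | 3 => !![1, -22364 / 8105, 47027 / 8105, -32768 / 8105;
            0, 1, -41665223 / 17893466, 23771757 / 17893466;
            0, 0, 1, -1]
  | 4 => !![1, -79483 / 30243, 130298 / 30243, -203938 / 30243, 40960 / 10081;
            0, 1, -8666179 / 4891658, 1785451711 / 728857042, -611524041 / 364428521;
            0, 0, 1, -12513157791 / 8163297691, 4349860100 / 8163297691;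
            0, 0, 0, 1, -1]
  | 5 => !![1, -325670 / 115221, 650248 / 115221, -681152 / 115221, 244291 / 38407,
              -163840 / 38407;
            0, 1, -1081449544 / 513831947, 32289674936 / 15928790357,
              -263268022998 / 111501532499, 160413316995 / 111501532499;
            0, 0, 1, -243051682323 / 232483590107, 389787703911 / 464967180214,
              -368651519479 / 464967180214;
            0, 0, 0, 1, -990705648788406 / 1012947663123553,
              -22242014335147 / 1012947663123553;
            0, 0, 0, 0, 1, -1]
  | _ => 0

noncomputable def bdfEnergyPivots : (q : ℕ) → Fin q → ℝ
  | 1 => ![1 / 2]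
  | 2 => ![14117 / 81920, 15031739 / 231292928]
  | 3 => ![8105 / 196608, 26840199 / 265584640, 156899329871 / 3517998563328]
  | 4 => ![10081 / 327680,
           364428521 / 2973007872,
           57143083837 / 1602898493440,
           444414586308807 / 19928372936032256]
  | 5 => ![38407 / 1638400,
           111501532499 / 566334259200,
           232483590107 / 4209311309824,
           1012947663123553 / 59039672674852864,
           3014521308490673217 / 232345883176628092928]
  | _ => 0

theorem bdfMultiplier_mem_Ico (q : ℕ) : bdfMultiplier q ∈ Set.Ico (0 : ℝ) 1 := by
  unfold bdfMultiplier
  split <;> norm_num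

section Certificates

variable {q : ℕ}

theorem bdfGMatrix_eq (hq : q ≤ 5) :
    bdfGMatrix q = (bdfGMatrixFactor q)ᴴ * diagonal (bdfGMatrixPivots q) * bdfGMatrixFactor q := by
  rw [← Matrix.ext_iff]
  interval_cases q <;>
    simp [Fin.forall_fin_succ, bdfGMatrix, bdfGMatrixFactor, bdfGMatrixPivots, mul_apply,
      Fin.sum_univ_succ] <;> norm_num

theorem posDef_bdfGMatrix (hq : q ≤ 5) : (bdfGMatrix q).PosDef := by
  rw [bdfGMatrix_eq hq]
  refine posDef_conjTranspose_mul_diagonal_mul ?_ ?_ ?_ <;> interval_cases q <;>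
    simp [IsUpperTriangular, BlockTriangular, Fin.forall_fin_succ, bdfGMatrixFactor,
      bdfGMatrixPivots]

theorem energyMatrix_bdf_eq (hq : q ≤ 5) :
    energyMatrix (fun i => bdfCoeff q (q - i)) (multiplierVector q (bdfMultiplier q)) (bdfGMatrix q)
      = (bdfEnergyFactor q)ᴴ * diagonal (bdfEnergyPivots q) * bdfEnergyFactor q := by
  rw [← Matrix.ext_iff]
  interval_cases q <;>
    simp [Fin.forall_fin_succ, energyMatrix, multiplierVector, bdfMultiplier, bdfGMatrix,
      bdfEnergyFactor, bdfEnergyPivots, bdfCoeff_eq, extendFirst, extendLast, Fin.snoc,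
      Fin.castPred, Fin.castLT, mul_apply, Fin.sum_univ_succ, sum_range_succ, Nat.choose] <;>
    norm_num

theorem posSemidef_energyMatrix_bdf (hq : q ≤ 5) :
    (energyMatrix (fun i => bdfCoeff q (q - i)) (multiplierVector q (bdfMultiplier q))
      (bdfGMatrix q)).PosSemidef := by
  rw [energyMatrix_bdf_eq hq]
  refine (PosSemidef.diagonal ?_).conjTranspose_mul_mul_same _
  interval_cases q <;> simp [Pi.le_def, Fin.forall_fin_succ, bdfEnergyPivots] <;> norm_num

end Certificates

theorem dahlquist_nevanlinna_odeh_general (q : ℕ) (hq5 : q ≤ 5)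
    (δ : ℕ → ℝ)
    (hδ : ∀ j, δ j =
      (∑ ℓ ∈ Finset.Icc 1 q,
        Polynomial.C ((ℓ : ℝ)⁻¹) * ((1 : Polynomial ℝ) - Polynomial.X) ^ ℓ).coeff j) :
    ∃ η : ℝ, η ∈ Set.Ico (0 : ℝ) 1 ∧
      ∃ G : Matrix (Fin q) (Fin q) ℝ, G.IsSymm ∧ G.PosDef ∧
        ∀ (E : Type) [NormedAddCommGroup E] [InnerProductSpace ℝ E] (w : ℕ → E),
          (∑ i : Fin q, ∑ j : Fin q, G i j * ⟪w (i.val + 1), w (j.val + 1)⟫)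
            - (∑ i : Fin q, ∑ j : Fin q, G i j * ⟪w i.val, w j.val⟫)
          ≤ ⟪∑ i ∈ Finset.range (q + 1), δ i • w (q - i),
              w q - η • w (q - 1)⟫ := by
  obtain rfl : δ = bdfCoeff q := funext hδ
  have hG := posDef_bdfGMatrix hq5
  refine ⟨bdfMultiplier q, bdfMultiplier_mem_Ico q, bdfGMatrix q,
    (conjTranspose_eq_transpose_of_trivial _).symm.trans hG.isHermitian, hG, fun E _ _ w => ?_⟩
  exact gNorm_sub_le_inner_of_posSemidef (posSemidef_energyMatrix_bdf hq5) w

/-- Combination of Dahlquist's G-stability theorem with the Nevanlinna–Odeh multiplier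
lemma for the BDF methods of orders 1 to 5. -/
theorem dahlquist_nevanlinna_odeh (q : ℕ) (hq1 : 1 ≤ q) (hq5 : q ≤ 5)
    (δ : ℕ → ℝ)
    (hδ : ∀ j, δ j =
      (∑ ℓ ∈ Finset.Icc 1 q,
        Polynomial.C ((ℓ : ℝ)⁻¹) * ((1 : Polynomial ℝ) - Polynomial.X) ^ ℓ).coeff j) :
    ∃ η : ℝ, η ∈ Set.Ico (0 : ℝ) 1 ∧
      ∃ G : Matrix (Fin q) (Fin q) ℝ, G.IsSymm ∧ G.PosDef ∧
        ∀ (E : Type) [NormedAddCommGroup E] [InnerProductSpace ℝ E] (w : ℕ → E),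
          (∑ i : Fin q, ∑ j : Fin q, G i j * ⟪w (i.val + 1), w (j.val + 1)⟫)
            - (∑ i : Fin q, ∑ j : Fin q, G i j * ⟪w i.val, w j.val⟫)
          ≤ ⟪∑ i ∈ Finset.range (q + 1), δ i • w (q - i),
              w q - η • w (q - 1)⟫ :=
  dahlquist_nevanlinna_odeh_general q hq5 δ hδ
end
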